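/- Let K be a field of arbitrary characteristic and R = K[x_1,…,x_n]. For every r ≥ 1, each 1 ≤ i ≤ n, and every f ∈ R, the Euler operators satisfy E_r(x_i·f) = x_i·(E_r(f) + E_{r−1}(f)); equivalently, E_r ∘ (multiplication by x_i) = (multiplication by x_i) ∘ (E_r + E_{r−1}) as K-linear endomorphisms of R, where E_0 is the identity. -/

import Mathlib

/-- The divided-power partial derivative `∂_i^{[j]}` on `K[x_1,…,x_n]`, determined on
monomials by `∂_i^{[j]}(x^a) = binom(a_i, j) • x^{a - j·e_i}` (zero when `a_i < j`). -/
noncomputable def dpDeriv (K : Type*) [CommRing K] {n : ℕ} (i : Fin n) (j : ℕ) :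
    MvPolynomial (Fin n) K →ₗ[K] MvPolynomial (Fin n) K :=
  (Finsupp.lsum K fun a : Fin n →₀ ℕ =>
    (((a i).choose j : K)) •
      (MvPolynomial.monomial (a - Finsupp.single i j) : K →ₗ[K] MvPolynomial (Fin n) K)) ∘ₗ
    (AddMonoidAlgebra.coeffLinearEquiv K).toLinearMap

/-- The `r`-th Euler operator `E_r = Σ_{i_1+⋯+i_n=r} x_1^{i_1}⋯x_n^{i_n} ∂_1^{[i_1]}⋯∂_n^{[i_n]}`
on `K[x_1,…,x_n]`. -/
noncomputable def eulerOp (K : Type*) [CommRing K] (n : ℕ) (r : ℕ) :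
    MvPolynomial (Fin n) K →ₗ[K] MvPolynomial (Fin n) K :=
  ∑ c ∈ Finset.Nat.antidiagonalTuple n r,
    LinearMap.mulLeft K (MvPolynomial.monomial (Finsupp.equivFunOnFinite.symm c) (1 : K)) ∘ₗ
      ((List.finRange n).map fun i => dpDeriv K i (c i)).prod

/-!
Every monomial is an eigenvector of the Euler operators: `E_r(x^a) = binom(|a|, r) x^a`, where
`|a|` is the total degree, because the coefficient `Σ_{c_1+⋯+c_n=r} Π_t binom(a_t, c_t)` collapses
by the Vandermonde identity. Multiplying by `x_i` raises `|a|` by one, and Pascal's rule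
`binom(|a|+1, r) = binom(|a|, r) + binom(|a|, r-1)` is the claimed identity on monomials.
-/

open MvPolynomial

theorem Finset.sum_piAntidiag_prod_choose {ι : Type*} [DecidableEq ι] (a : ι → ℕ)
    (s : Finset ι) (r : ℕ) :
    ∑ c ∈ s.piAntidiag r, ∏ t ∈ s, (a t).choose (c t) = (∑ t ∈ s, a t).choose r := by
  induction s using Finset.cons_induction generalizing r with
  | empty => cases r <;> simp
  | cons i s hi ih =>
    rw [Finset.piAntidiag_cons hi, Finset.sum_disjiUnion, Finset.sum_cons, Nat.add_choose_eq]
    refine Finset.sum_congr rfl fun p _ => ?_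
    rw [Finset.sum_map, ← ih p.2, Finset.mul_sum]
    refine Finset.sum_congr rfl fun c hc => ?_
    have hci : c i = 0 := by
      by_contra h
      exact hi ((Finset.mem_piAntidiag.mp hc).2 i h)
    rw [Finset.prod_cons]
    simp only [addRightEmbedding_apply, Pi.add_apply, hci, zero_add]
    congr 1
    refine Finset.prod_congr rfl fun t ht => ?_
    rw [if_neg (by rintro rfl; exact hi ht), add_zero]

theorem dpDeriv_monomial (K : Type*) [CommRing K] {n : ℕ} (i : Fin n) (j : ℕ)
    (a : Fin n →₀ ℕ) (k : K) :
    dpDeriv K i j (monomial a k) = ((a i).choose j : K) • monomial (a - Finsupp.single i j) k := by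
  simp [dpDeriv, ← single_eq_monomial]

theorem list_prod_dpDeriv_monomial (K : Type*) [CommRing K] {n : ℕ} (c : Fin n → ℕ)
    {L : List (Fin n)} (hL : L.Nodup) (a : Fin n →₀ ℕ) (k : K) :
    (L.map fun t => dpDeriv K t (c t)).prod (monomial a k) =
      ((∏ t ∈ L.toFinset, (a t).choose (c t) : ℕ) : K) •
        monomial (a - ∑ t ∈ L.toFinset, Finsupp.single t (c t)) k := by
  induction L with
  | nil => simp
  | cons t L ih =>
    obtain ⟨ht, hL⟩ := List.nodup_cons.mp hL
    have htL : t ∉ L.toFinset := by simpa using ht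
    have hexp : (a - ∑ s ∈ L.toFinset, Finsupp.single s (c s)) t = a t := by
      rw [Finsupp.tsub_apply, Finset.sum_apply',
        Finset.sum_eq_zero fun s hs => Finsupp.single_eq_of_ne (by rintro rfl; exact htL hs),
        tsub_zero]
    rw [List.map_cons, List.prod_cons, Module.End.mul_apply, ih hL, map_smul, dpDeriv_monomial,
      hexp, List.toFinset_cons, Finset.prod_insert htL, Finset.sum_insert htL, smul_smul,
      ← Nat.cast_mul, mul_comm ((a t).choose (c t)), tsub_tsub, add_comm]

theorem eulerOp_monomial (K : Type*) [CommRing K] {n : ℕ} (r : ℕ) (a : Fin n →₀ ℕ) (k : K) :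
    eulerOp K n r (monomial a k) = ((a.degree.choose r : ℕ) : K) • monomial a k := by
  rw [Finsupp.degree_eq_sum, ← Finset.sum_piAntidiag_prod_choose,
    Finset.piAntidiag_univ_fin_eq_antidiagonalTuple, eulerOp, LinearMap.sum_apply, Nat.cast_sum,
    Finset.sum_smul]
  refine Finset.sum_congr rfl fun c _ => ?_
  rw [LinearMap.comp_apply, list_prod_dpDeriv_monomial K c (List.nodup_finRange n),
    List.toFinset_finRange, ← Finsupp.equivFunOnFinite_symm_eq_sum, map_smul,
    LinearMap.mulLeft_apply, monomial_mul, one_mul]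
  by_cases hzero : ∏ t, (a t).choose (c t) = 0
  · simp [hzero]
  · have hle : Finsupp.equivFunOnFinite.symm c ≤ a := fun t =>
      not_lt.mp fun hlt => hzero <| Finset.prod_eq_zero (Finset.mem_univ t)
        (Nat.choose_eq_zero_of_lt hlt)
    rw [add_tsub_cancel_of_le hle]

/-- For every `r ≥ 1`, each `i`, and every polynomial `f`, the Euler
operators satisfy `E_r(x_i · f) = x_i · (E_r(f) + E_{r-1}(f))`; here `E_0` (the case
`r = 1` of `E_{r-1}`) is the identity operator. -/
theorem eulerOp_mul_X (K : Type*) [Field K] (n : ℕ) (r : ℕ) (hr : 1 ≤ r) (i : Fin n)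
    (f : MvPolynomial (Fin n) K) :
    eulerOp K n r (MvPolynomial.X i * f) =
      MvPolynomial.X i * (eulerOp K n r f + eulerOp K n (r - 1) f) := by
  obtain ⟨s, rfl⟩ : ∃ s, r = s + 1 := Nat.exists_eq_add_of_le' hr
  induction f using MvPolynomial.induction_on' with
  | add p q hp hq => rw [mul_add, map_add, map_add, map_add, hp, hq]; ring
  | monomial a k =>
    have hX : X i * monomial a k = monomial (Finsupp.single i 1 + a) k := by
      rw [X, monomial_mul, one_mul]
    have hdeg : (Finsupp.single i 1 + a).degree = a.degree + 1 := by
      rw [map_add, Finsupp.degree_single, add_comm]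
    rw [hX, eulerOp_monomial, eulerOp_monomial, eulerOp_monomial, hdeg, Nat.add_sub_cancel,
      Nat.choose_succ_succ', Nat.cast_add, add_smul, mul_add, mul_smul_comm, mul_smul_comm, hX,
      add_comm]
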